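/- Let n ≥ 64 be an integer and let a_i/b_i and a_j/b_j, with indices i < j, be two fractions in the Farey sequence of order n whose denominators satisfy b_i ≤ n^{1/3} and b_j ≤ n^{1/3}. Then j − i > n/2. -/

import Mathlib

/-- The Farey fractions of order `n`: the rationals in `[0,1]` whose (reduced) denominator
is at most `n`. -/
def fareySet (n : ℕ) : Finset ℚ :=
  ((Finset.range (n + 1) ×ˢ Finset.range (n + 1)).image fun p => (p.1 : ℚ) / (p.2 : ℚ)).filter
    fun q => 0 ≤ q ∧ q ≤ 1 ∧ q.den ≤ n

/-- The Farey sequence of order `n`: the Farey fractions of order `n` listed in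
increasing order. -/
def fareyList (n : ℕ) : List ℚ := (fareySet n).sort (· ≤ ·)

/-- Two reduced fractions `q = a/b` and `q' = a'/b'` are similarly ordered if
`(a' - a) * (b' - b) ≥ 0`. -/
def SimilarlyOrdered (q q' : ℚ) : Prop :=
  0 ≤ (q'.num - q.num) * ((q'.den : ℤ) - (q.den : ℤ))

/-
Write `q = a/b < r = c/d` for the two fractions. Each pair `(k, l)` of coprime positive integers
with `b k + d l ≤ n` gives a different fraction `(a k + c l) / (b k + d l)` of the Farey sequence
strictly between `q` and `r`, so `j - i - 1` is at least the number of such pairs.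
The triangle `b k + d l ≤ m` holds at most `m² / (2bd)` lattice points, and at least
`(m - b)(m - b - d) / (2bd)`. A non-coprime pair is `g` times a point of the triangle for `n / g`,
where `g = 2` or `g ≥ 3` is odd; as `1/4 + ∑_{g ≥ 3 odd} 1/g² ≤ 1/2`, at most `n² / (4bd)` pairs
are lost. With `b, d ≤ n^{1/3}` and `n ≥ 64` this leaves at least `n / 2` coprime pairs.
-/

open Finset

theorem mem_fareySet_iff {n : ℕ} {q : ℚ} : q ∈ fareySet n ↔ 0 ≤ q ∧ q ≤ 1 ∧ q.den ≤ n := by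
  refine ⟨fun h => (mem_filter.1 h).2, fun ⟨h0, h1, hden⟩ => mem_filter.2 ⟨?_, h0, h1, hden⟩⟩
  have hnum0 : 0 ≤ q.num := Rat.num_nonneg.2 h0
  have hnum1 : q.num ≤ q.den := Rat.num_le_denom_iff.2 h1
  refine mem_image.2 ⟨(q.num.toNat, q.den), mem_product.2 ⟨?_, ?_⟩, ?_⟩
  · rw [mem_range]; omega
  · rw [mem_range]; omega
  · rw [← Int.cast_natCast, Int.toNat_of_nonneg hnum0]
    exact Rat.num_div_den q

theorem card_filter_between_sort_get_le {α : Type*} [LinearOrder α] (s : Finset α)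
    (i j : Fin (s.sort (· ≤ ·)).length) :
    #(s.filter fun x => (s.sort (· ≤ ·)).get i < x ∧ x < (s.sort (· ≤ ·)).get j) ≤ j - i - 1 := by
  have hmono := (sortedLT_sort s).strictMono_get
  calc #(s.filter fun x => (s.sort (· ≤ ·)).get i < x ∧ x < (s.sort (· ≤ ·)).get j)
      ≤ #((Ioo i j).image (s.sort (· ≤ ·)).get) := by
        refine card_le_card fun x hx => ?_
        obtain ⟨hxs, hix, hxj⟩ := mem_filter.1 hx
        obtain ⟨k, rfl⟩ := List.mem_iff_get.1 ((mem_sort (· ≤ ·)).2 hxs)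
        exact mem_image_of_mem _ (mem_Ioo.2 ⟨hmono.lt_iff_lt.1 hix, hmono.lt_iff_lt.1 hxj⟩)
    _ ≤ #(Ioo i j) := card_image_le
    _ = j - i - 1 := Fin.card_Ioo i j

theorem Prod.eq_of_coprime_of_mul_eq_mul {p p' : ℕ × ℕ} (hp : p.1.Coprime p.2)
    (hp' : p'.1.Coprime p'.2) (h : p.1 * p'.2 = p'.1 * p.2) : p = p' := by
  refine Prod.ext (Nat.dvd_antisymm ?_ ?_) (Nat.dvd_antisymm ?_ ?_)
  · exact hp.dvd_of_dvd_mul_right (by rw [← h]; exact dvd_mul_right _ _)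
  · exact hp'.dvd_of_dvd_mul_right (by rw [h]; exact dvd_mul_right _ _)
  · exact hp.symm.dvd_of_dvd_mul_left (by rw [h]; exact dvd_mul_left _ _)
  · exact hp'.symm.dvd_of_dvd_mul_left (by rw [← h]; exact dvd_mul_left _ _)

theorem sum_range_inv_sq_odd_le (N : ℕ) : ∑ e ∈ range N, ((2 * e + 3 : ℝ) ^ 2)⁻¹ ≤ 1 / 4 := by
  have hterm (e : ℕ) : ((2 * e + 3 : ℝ) ^ 2)⁻¹ ≤ ((e + 1 : ℝ)⁻¹ - ((e + 1 : ℕ) + 1 : ℝ)⁻¹) / 4 := by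
    calc ((2 * e + 3 : ℝ) ^ 2)⁻¹ ≤ (4 * ((e + 1) * (e + 1 + 1)) : ℝ)⁻¹ :=
          inv_anti₀ (by positivity) (by nlinarith)
      _ = _ := by push_cast; field_simp; ring
  calc ∑ e ∈ range N, ((2 * e + 3 : ℝ) ^ 2)⁻¹
      ≤ (∑ e ∈ range N, (((e : ℕ) + 1 : ℝ)⁻¹ - ((e + 1 : ℕ) + 1 : ℝ)⁻¹)) / 4 := by
        rw [sum_div]; exact sum_le_sum fun e _ => hterm e
    _ = (1 - ((N : ℝ) + 1)⁻¹) / 4 := by rw [sum_range_sub' (fun e : ℕ => ((e : ℝ) + 1)⁻¹)]; simp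
    _ ≤ 1 / 4 := by gcongr; simp; positivity

def latticeTriangle (B C m : ℕ) : Finset (ℕ × ℕ) :=
  (Icc 1 m ×ˢ Icc 1 m).filter fun p => B * p.1 + C * p.2 ≤ m

section LatticeTriangle

variable {B C : ℕ}

theorem mem_latticeTriangle (hB : 0 < B) (hC : 0 < C) {m : ℕ} {p : ℕ × ℕ} :
    p ∈ latticeTriangle B C m ↔ 1 ≤ p.1 ∧ 1 ≤ p.2 ∧ B * p.1 + C * p.2 ≤ m := by
  simp only [latticeTriangle, mem_filter, mem_product, mem_Icc]
  constructor
  · tauto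
  · rintro ⟨h1, h2, h3⟩
    exact ⟨⟨⟨h1, by nlinarith⟩, h2, by nlinarith⟩, h3⟩

theorem latticeTriangle_eq_empty (hB : 0 < B) (hC : 0 < C) {m : ℕ} (hm : m < C) :
    latticeTriangle B C m = ∅ := by
  refine eq_empty_of_forall_notMem fun p hp => ?_
  rw [mem_latticeTriangle hB hC] at hp
  nlinarith

theorem card_latticeTriangle_add (hB : 0 < B) (hC : 0 < C) (m : ℕ) :
    #(latticeTriangle B C (m + C)) = #(latticeTriangle B C m) + m / B := by
  rw [← card_filter_add_card_filter_not (fun p : ℕ × ℕ => p.2 ≠ 1)]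
  congr 1
  · refine card_nbij' (fun p => (p.1, p.2 - 1)) (fun p => (p.1, p.2 + 1)) ?_ ?_ ?_ ?_
    · intro p hp
      simp only [mem_coe, mem_filter, mem_latticeTriangle hB hC] at hp ⊢
      obtain ⟨⟨h1, h2, h3⟩, h4⟩ := hp
      have hCl : C * 2 ≤ C * p.2 := Nat.mul_le_mul_left C (by omega)
      refine ⟨h1, by omega, ?_⟩
      rw [Nat.mul_sub_one]
      omega
    · intro p hp
      simp only [mem_coe, mem_filter, mem_latticeTriangle hB hC] at hp ⊢
      exact ⟨⟨hp.1, by omega, by nlinarith⟩, by omega⟩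
    · intro p hp
      simp only [mem_coe, mem_filter, mem_latticeTriangle hB hC] at hp
      exact Prod.ext rfl (Nat.sub_add_cancel hp.1.2.1)
    · exact fun _ _ => rfl
  · have : (latticeTriangle B C (m + C)).filter (fun p => ¬p.2 ≠ 1) = Icc 1 (m / B) ×ˢ {1} := by
      ext ⟨k, l⟩
      simp only [mem_filter, mem_latticeTriangle hB hC, mem_product, mem_Icc, mem_singleton,
        Nat.le_div_iff_mul_le hB, not_not]
      constructor
      · rintro ⟨⟨h1, -, h3⟩, rfl⟩
        exact ⟨⟨h1, by linarith⟩, rfl⟩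
      · rintro ⟨⟨h1, h3⟩, rfl⟩
        exact ⟨⟨h1, le_refl _, by linarith⟩, rfl⟩
    rw [this, card_product, Nat.card_Icc]
    simp

theorem two_mul_mul_card_latticeTriangle_le (hB : 0 < B) (hC : 0 < C) (m : ℕ) :
    2 * B * C * #(latticeTriangle B C m) ≤ m ^ 2 := by
  induction m using Nat.strong_induction_on with
  | _ m ih =>
  rcases lt_or_ge m C with hm | hm
  · simp [latticeTriangle_eq_empty hB hC hm]
  obtain ⟨m, rfl⟩ : ∃ m', m = m' + C := ⟨m - C, by omega⟩
  rw [card_latticeTriangle_add hB hC]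
  have ih := ih m (by omega)
  have hdiv : m / B * B ≤ m := Nat.div_mul_le_self m B
  nlinarith

theorem le_two_mul_mul_card_latticeTriangle (hB : 0 < B) (hC : 0 < C) {m : ℕ} (hm : B + C ≤ m) :
    ((m : ℝ) - B) * (m - B - C) ≤ 2 * B * C * #(latticeTriangle B C m) := by
  induction m using Nat.strong_induction_on with
  | _ m ih =>
  obtain ⟨m, rfl⟩ : ∃ m', m = m' + C := ⟨m - C, by omega⟩
  rw [card_latticeTriangle_add hB hC]
  have hdiv : (m : ℝ) < (m / B : ℕ) * B + B := by exact_mod_cast Nat.lt_div_mul_add hB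
  have hBC : (0 : ℝ) < B * C := by positivity
  push_cast
  rcases le_or_gt (B + C) m with hm' | hm'
  · have ih := ih m (by omega) hm'
    have hmR : (B : ℝ) + C ≤ m := by exact_mod_cast hm'
    nlinarith
  · have hmR : (m : ℝ) < B + C := by exact_mod_cast hm'
    have hBm : (B : ℝ) ≤ m := by exact_mod_cast (show B ≤ m by omega)
    nlinarith

theorem mem_image_smul_latticeTriangle_div (hB : 0 < B) (hC : 0 < C) {m d : ℕ} {p : ℕ × ℕ}
    (hp : p ∈ latticeTriangle B C m) (hd1 : d ∣ p.1) (hd2 : d ∣ p.2) :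
    p ∈ (latticeTriangle B C (m / d)).image (d • ·) := by
  obtain ⟨_, _⟩ := p
  obtain ⟨k, rfl⟩ := hd1
  obtain ⟨l, rfl⟩ := hd2
  obtain ⟨h1, h2, h3⟩ := (mem_latticeTriangle hB hC).1 hp
  have hd : 0 < d := Nat.pos_of_mul_pos_right h1
  refine mem_image.2 ⟨(k, l), ?_, rfl⟩
  rw [mem_latticeTriangle hB hC, Nat.le_div_iff_mul_le hd]
  exact ⟨Nat.pos_of_mul_pos_left h1, Nat.pos_of_mul_pos_left h2, by linarith⟩

theorem filter_not_coprime_latticeTriangle_subset (hB : 0 < B) (hC : 0 < C) (m : ℕ) :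
    (latticeTriangle B C m).filter (fun p => ¬ p.1.Coprime p.2) ⊆
      (latticeTriangle B C (m / 2)).image (2 • ·) ∪
        (range m).biUnion fun e =>
          (latticeTriangle B C (m / (2 * e + 3))).image ((2 * e + 3) • ·) := by
  intro p hp
  rw [mem_filter] at hp
  obtain ⟨hpT, hcop⟩ := hp
  have hg1 : p.1.gcd p.2 ≠ 1 := hcop
  obtain ⟨h1, -, h3⟩ := (mem_latticeTriangle hB hC).1 hpT
  have hgm : p.1.gcd p.2 ≤ m := (Nat.gcd_le_left _ h1).trans (by nlinarith)
  have hg0 : 0 < p.1.gcd p.2 := Nat.gcd_pos_of_pos_left _ h1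
  rcases Nat.even_or_odd (p.1.gcd p.2) with ⟨g, hg⟩ | ⟨g, hg⟩
  · have h2g : 2 ∣ p.1.gcd p.2 := ⟨g, by omega⟩
    exact mem_union_left _ <| mem_image_smul_latticeTriangle_div hB hC hpT
      (h2g.trans (Nat.gcd_dvd_left _ _)) (h2g.trans (Nat.gcd_dvd_right _ _))
  · refine mem_union_right _ <| mem_biUnion.2 ⟨g - 1, mem_range.2 (by omega), ?_⟩
    rw [show 2 * (g - 1) + 3 = p.1.gcd p.2 by omega]
    exact mem_image_smul_latticeTriangle_div hB hC hpT (Nat.gcd_dvd_left _ _)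
      (Nat.gcd_dvd_right _ _)

theorem two_mul_mul_card_latticeTriangle_div_le (hB : 0 < B) (hC : 0 < C) (m d : ℕ) :
    2 * B * C * (#(latticeTriangle B C (m / d)) : ℝ) ≤ (m : ℝ) ^ 2 / (d : ℝ) ^ 2 := by
  calc 2 * B * C * (#(latticeTriangle B C (m / d)) : ℝ) ≤ ((m / d : ℕ) : ℝ) ^ 2 := by
        exact_mod_cast two_mul_mul_card_latticeTriangle_le hB hC (m / d)
    _ ≤ _ := by rw [← div_pow]; gcongr; exact Nat.cast_div_le

theorem le_two_mul_mul_card_coprime_latticeTriangle {m : ℕ} (hB : 0 < B) (hC : 0 < C)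
    (hm : B + C ≤ m) :
    ((m : ℝ) - B) * (m - B - C) - (m : ℝ) ^ 2 / 2 ≤
      2 * B * C * #((latticeTriangle B C m).filter fun p => p.1.Coprime p.2) := by
  set T := latticeTriangle B C m
  have hsplit := card_filter_add_card_filter_not (s := T) (fun p => p.1.Coprime p.2)
  have hbad : #(T.filter fun p => ¬ p.1.Coprime p.2) ≤ #(latticeTriangle B C (m / 2)) +
      ∑ e ∈ range m, #(latticeTriangle B C (m / (2 * e + 3))) :=
    (card_le_card (filter_not_coprime_latticeTriangle_subset hB hC m)).trans <|
      (card_union_le _ _).trans <| add_le_add card_image_le <|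
        card_biUnion_le.trans <| sum_le_sum fun _ _ => card_image_le
  have hbadR : 2 * B * C * (#(T.filter fun p => ¬ p.1.Coprime p.2) : ℝ) ≤ (m : ℝ) ^ 2 / 2 := by
    calc 2 * B * C * (#(T.filter fun p => ¬ p.1.Coprime p.2) : ℝ)
        ≤ 2 * B * C * (#(latticeTriangle B C (m / 2)) : ℝ) +
          ∑ e ∈ range m, 2 * B * C * (#(latticeTriangle B C (m / (2 * e + 3))) : ℝ) := by
          rw [← mul_sum, ← mul_add]; gcongr; exact_mod_cast hbad
      _ ≤ (m : ℝ) ^ 2 / 2 ^ 2 + ∑ e ∈ range m, (m : ℝ) ^ 2 * ((2 * e + 3 : ℝ) ^ 2)⁻¹ := by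
          refine add_le_add (by exact_mod_cast two_mul_mul_card_latticeTriangle_div_le hB hC m 2)
            (sum_le_sum fun e _ => ?_)
          simpa [div_eq_mul_inv] using two_mul_mul_card_latticeTriangle_div_le hB hC m (2 * e + 3)
      _ ≤ (m : ℝ) ^ 2 / 2 ^ 2 + (m : ℝ) ^ 2 * (1 / 4) := by
          rw [← mul_sum]; gcongr; exact sum_range_inv_sq_odd_le m
      _ = (m : ℝ) ^ 2 / 2 := by ring
  have hT := le_two_mul_mul_card_latticeTriangle hB hC hm
  have hsplitR : (#T : ℝ) = #(T.filter fun p => p.1.Coprime p.2) +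
      #(T.filter fun p => ¬ p.1.Coprime p.2) := by exact_mod_cast hsplit.symm
  rw [hsplitR] at hT
  linarith

theorem half_le_card_coprime_latticeTriangle {m : ℕ} (hB : 0 < B) (hC : 0 < C)
    (hm : 4 * B + 2 * C + 2 * B * C ≤ m) :
    (m : ℝ) / 2 ≤ #((latticeTriangle B C m).filter fun p => p.1.Coprime p.2) := by
  have hcount := le_two_mul_mul_card_coprime_latticeTriangle hB hC (by nlinarith)
  have hmR : 4 * (B : ℝ) + 2 * C + 2 * B * C ≤ m := by exact_mod_cast hm
  have hBC : (0 : ℝ) < 2 * B * C := by positivity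
  refine le_of_mul_le_mul_left ?_ hBC
  nlinarith [mul_nonneg (Nat.cast_nonneg m : (0 : ℝ) ≤ m) (sub_nonneg.2 hmR)]

end LatticeTriangle

def weightedMediant (q r : ℚ) (p : ℕ × ℕ) : ℚ :=
  ((q.num * p.1 + r.num * p.2 : ℤ) : ℚ) / ((q.den * p.1 + r.den * p.2 : ℕ) : ℚ)

section WeightedMediant

variable {q r : ℚ} {p : ℕ × ℕ}

theorem weightedMediant_eq (q r : ℚ) (p : ℕ × ℕ) :
    weightedMediant q r p = (q.den * p.1 * q + r.den * p.2 * r) / (q.den * p.1 + r.den * p.2) := by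
  rw [weightedMediant]
  push_cast
  rw [← Rat.mul_den_eq_num, ← Rat.mul_den_eq_num]
  ring

theorem lt_weightedMediant (h : q < r) (hp : 0 < p.2) : q < weightedMediant q r p := by
  have hv : (0 : ℚ) < r.den * p.2 := by positivity
  rw [weightedMediant_eq, lt_div_iff₀ (by positivity)]
  nlinarith [mul_lt_mul_of_pos_left h hv]

theorem weightedMediant_lt (h : q < r) (hp : 0 < p.1) : weightedMediant q r p < r := by
  have hu : (0 : ℚ) < q.den * p.1 := by positivity
  rw [weightedMediant_eq, div_lt_iff₀ (by positivity)]
  nlinarith [mul_lt_mul_of_pos_left h hu]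

theorem den_weightedMediant_le (hp : 0 < q.den * p.1 + r.den * p.2) :
    (weightedMediant q r p).den ≤ q.den * p.1 + r.den * p.2 := by
  have hdiv : weightedMediant q r p =
      Rat.divInt (q.num * p.1 + r.num * p.2) ((q.den * p.1 + r.den * p.2 : ℕ) : ℤ) := by
    rw [Rat.divInt_eq_div, Int.cast_natCast, weightedMediant]
  have hle := Int.le_of_dvd (by exact_mod_cast hp)
    (Rat.den_dvd (q.num * p.1 + r.num * p.2) ((q.den * p.1 + r.den * p.2 : ℕ) : ℤ))
  rw [← hdiv] at hle
  exact_mod_cast hle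

theorem weightedMediant_injOn (h : q ≠ r) :
    Set.InjOn (weightedMediant q r) {p | p.1.Coprime p.2} := by
  have hden {p : ℕ × ℕ} (hp : p.1.Coprime p.2) : ((q.den * p.1 + r.den * p.2 : ℕ) : ℚ) ≠ 0 := by
    have : p.1 ≠ 0 ∨ p.2 ≠ 0 := by
      by_contra! h0
      simp [h0.1, h0.2] at hp
    rcases this with h0 | h0 <;> positivity
  intro p hp p' hp' heq
  rw [weightedMediant, weightedMediant, div_eq_div_iff (hden hp) (hden hp')] at heq
  have heqZ : (q.num * p.1 + r.num * p.2) * (q.den * p'.1 + r.den * p'.2 : ℤ) =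
      (q.num * p'.1 + r.num * p'.2) * (q.den * p.1 + r.den * p.2 : ℤ) := by exact_mod_cast heq
  have hqr : q.num * r.den - r.num * q.den ≠ 0 := sub_ne_zero.2 (mt Rat.eq_iff_mul_eq_mul.2 h)
  have hcross : ((p.1 * p'.2 : ℕ) : ℤ) = (p'.1 * p.2 : ℕ) := by
    push_cast
    refine sub_eq_zero.1 ((mul_eq_zero.1 ?_).resolve_left hqr)
    linear_combination heqZ
  exact Prod.eq_of_coprime_of_mul_eq_mul hp hp' (by exact_mod_cast hcross)

theorem mapsTo_weightedMediant_latticeTriangle {n : ℕ} (hq : q ∈ fareySet n)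
    (hr : r ∈ fareySet n) (h : q < r) :
    Set.MapsTo (weightedMediant q r) (latticeTriangle q.den r.den n)
      ((fareySet n).filter fun x => q < x ∧ x < r) := by
  intro p hp
  obtain ⟨h1, h2, h3⟩ := (mem_latticeTriangle q.den_pos r.den_pos).1 hp
  rw [mem_fareySet_iff] at hq hr
  have hqm := lt_weightedMediant h h2
  have hmr := weightedMediant_lt h h1
  rw [mem_coe, mem_filter, mem_fareySet_iff]
  exact ⟨⟨by linarith, by linarith, (den_weightedMediant_le (by positivity)).trans h3⟩, hqm, hmr⟩

end WeightedMediant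

theorem four_mul_add_two_mul_add_two_mul_mul_le {B C n : ℕ} (hB : B ^ 3 ≤ n) (hC : C ^ 3 ≤ n)
    (hn : 64 ≤ n) : 4 * B + 2 * C + 2 * B * C ≤ n := by
  obtain ⟨M, hBM, hCM, hM⟩ : ∃ M, B ≤ M ∧ C ≤ M ∧ M ^ 3 ≤ n := by
    rcases le_total B C with h | h
    exacts [⟨C, h, le_rfl, hC⟩, ⟨B, le_rfl, h, hB⟩]
  have hBC : B * C ≤ M * M := Nat.mul_le_mul hBM hCM
  suffices 6 * M + 2 * (M * M) ≤ n by linarith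
  rcases le_or_gt M 4 with h4 | h4
  · nlinarith
  · have : M * (2 * M + 6) ≤ M * (M * M) := Nat.mul_le_mul_left M (by nlinarith)
    nlinarith

theorem pow_three_le_of_le_rpow_one_third {d n : ℕ} (h : (d : ℝ) ≤ (n : ℝ) ^ ((1 : ℝ) / 3)) :
    d ^ 3 ≤ n := by
  have hcube : ((n : ℝ) ^ ((1 : ℝ) / 3)) ^ 3 = n := by
    rw [one_div, show (3 : ℝ) = ((3 : ℕ) : ℝ) by norm_num,
      Real.rpow_inv_natCast_pow (by positivity) (by norm_num)]
  exact_mod_cast hcube ▸ pow_le_pow_left₀ (by positivity) h 3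

/-- If `n ≥ 64` and `a_i/b_i`, `a_j/b_j` (with `i < j`) are two fractions in the Farey
sequence of order `n` whose denominators are both at most `n^{1/3}`, then `j − i > n/2`. -/
theorem farey_far_apart_of_both_denominators_small (n : ℕ) (hn : 64 ≤ n)
    (i j : Fin (fareyList n).length) (hij : i < j)
    (hi : ((((fareyList n).get i).den : ℝ)) ≤ (n : ℝ) ^ ((1 : ℝ) / 3))
    (hj : ((((fareyList n).get j).den : ℝ)) ≤ (n : ℝ) ^ ((1 : ℝ) / 3)) :
    (n : ℝ) / 2 < ((j : ℕ) : ℝ) - ((i : ℕ) : ℝ) := by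
  set q := (fareyList n).get i
  set r := (fareyList n).get j
  have hqr : q < r := (sortedLT_sort _).strictMono_get hij
  have hq : q ∈ fareySet n := (mem_sort _).1 ((fareyList n).get_mem i)
  have hr : r ∈ fareySet n := (mem_sort _).1 ((fareyList n).get_mem j)
  have hcount := half_le_card_coprime_latticeTriangle q.den_pos r.den_pos
    (four_mul_add_two_mul_add_two_mul_mul_le (pow_three_le_of_le_rpow_one_third hi)
      (pow_three_le_of_le_rpow_one_third hj) hn)
  have hinj := card_le_card_of_injOn (weightedMediant q r)
    ((mapsTo_weightedMediant_latticeTriangle hq hr hqr).mono (filter_subset _ _) subset_rfl)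
    ((weightedMediant_injOn hqr.ne).mono fun p hp => (mem_filter.1 hp).2)
  have hbetween := card_filter_between_sort_get_le (fareySet n) i j
  have hgap : (n : ℝ) / 2 ≤ ((j : ℕ) - (i : ℕ) - 1 : ℕ) :=
    hcount.trans (by exact_mod_cast hinj.trans hbetween)
  have hij' : (i : ℕ) < j := hij
  push_cast [Nat.sub_sub, Nat.cast_sub (show (i : ℕ) + 1 ≤ j from hij')] at hgap
  linarith
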